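/- arXiv:2009.03206 — 8 statements merged into one kernel-verified Lean document; each statement's English description precedes it below -/
import Mathlib

section
/- Let T be a bounded linear operator on a complex Hilbert space H. Then ‖T‖² + max{c(|T|²), c(|T*|²)} ≤ ‖T*T + TT*‖, where c(A) = inf{|⟨Ax,x⟩| : ‖x‖=1} is the Crawford number. -/
/-- The Crawford number `c(A) = inf { |⟨Ax,x⟩| : ‖x‖ = 1 }`. -/
noncomputable def crawford {H : Type*} [NormedAddCommGroup H] [InnerProductSpace ℂ H]
    (A : H →L[ℂ] H) : ℝ :=
  sInf {r : ℝ | ∃ x : H, ‖x‖ = 1 ∧ r = ‖(inner ℂ (A x) x : ℂ)‖}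

/-!
For a unit vector `x`, `⟨(T*T + TT*)x, x⟩ = ‖Tx‖² + ‖T*x‖² ≤ ‖T*T + TT*‖`, while
`c(T*T) ≤ ⟨T*Tx, x⟩ = ‖Tx‖²` and `c(TT*) ≤ ‖T*x‖²`. Hence `‖T*x‖² + c(T*T)` and
`‖Tx‖² + c(TT*)` are bounded by `‖T*T + TT*‖` for every unit `x`; taking the supremum over `x`
and using `‖T*‖ = ‖T‖` gives both halves of the maximum.
-/

open ContinuousLinearMap

theorem ContinuousLinearMap.sq_opNorm_add_le_of_forall_norm_eq_one {𝕜 E F : Type*} [RCLike 𝕜]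
    [NormedAddCommGroup E] [NormedSpace 𝕜 E] [Nontrivial E] [NormedAddCommGroup F]
    [NormedSpace 𝕜 F] (S : E →L[𝕜] F) {c M : ℝ}
    (h : ∀ x : E, ‖x‖ = 1 → ‖S x‖ ^ 2 + c ≤ M) : ‖S‖ ^ 2 + c ≤ M := by
  obtain ⟨y, hy⟩ := exists_ne (0 : E)
  set x₀ := (‖y‖⁻¹ : 𝕜) • y
  have hx₀ : ‖x₀‖ = 1 := by simp [x₀, norm_smul, norm_ne_zero_iff.mpr hy]
  have hcM : 0 ≤ M - c := by nlinarith [h x₀ hx₀, sq_nonneg ‖S x₀‖]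
  have hS : ‖S‖ ≤ √(M - c) := opNorm_le_of_unit_norm (Real.sqrt_nonneg _) fun x hx ↦
    Real.le_sqrt_of_sq_le (by linarith [h x hx])
  nlinarith [Real.sq_sqrt hcM, norm_nonneg S]

section InnerProductSpace

variable {𝕜 H : Type*} [RCLike 𝕜] [NormedAddCommGroup H] [InnerProductSpace 𝕜 H] [CompleteSpace H]

theorem ContinuousLinearMap.inner_adjoint_mul_self_apply (S : H →L[𝕜] H) (x : H) :
    inner 𝕜 ((adjoint S * S) x) x = ((‖S x‖ ^ 2 : ℝ) : 𝕜) := by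
  rw [mul_apply_eq_comp, adjoint_inner_left, inner_self_eq_norm_sq_to_K, RCLike.ofReal_pow]

theorem ContinuousLinearMap.norm_apply_sq_add_norm_adjoint_apply_sq_le (T : H →L[𝕜] H) {x : H}
    (hx : ‖x‖ = 1) : ‖T x‖ ^ 2 + ‖adjoint T x‖ ^ 2 ≤ ‖adjoint T * T + T * adjoint T‖ := by
  set A := adjoint T * T + T * adjoint T
  have hA : inner 𝕜 (A x) x = ((‖T x‖ ^ 2 + ‖adjoint T x‖ ^ 2 : ℝ) : 𝕜) := by
    have h := inner_adjoint_mul_self_apply (adjoint T) x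
    rw [adjoint_adjoint] at h
    rw [add_apply, inner_add_left, inner_adjoint_mul_self_apply, h, RCLike.ofReal_add]
  calc ‖T x‖ ^ 2 + ‖adjoint T x‖ ^ 2 = ‖inner 𝕜 (A x) x‖ := by
        rw [hA, RCLike.norm_ofReal, abs_of_nonneg (by positivity)]
    _ ≤ ‖A x‖ * ‖x‖ := norm_inner_le_norm _ _
    _ ≤ ‖A‖ * ‖x‖ * ‖x‖ := by gcongr; exact le_opNorm _ _
    _ = ‖A‖ := by rw [hx, mul_one, mul_one]

end InnerProductSpace

section Crawford

variable {H : Type*} [NormedAddCommGroup H] [InnerProductSpace ℂ H]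

theorem crawford_le (A : H →L[ℂ] H) {x : H} (hx : ‖x‖ = 1) :
    crawford A ≤ ‖(inner ℂ (A x) x : ℂ)‖ :=
  csInf_le ⟨0, fun _ ⟨_, _, hy⟩ ↦ hy ▸ norm_nonneg _⟩ ⟨x, hx, rfl⟩

theorem crawford_eq_zero_of_subsingleton [Subsingleton H] (A : H →L[ℂ] H) : crawford A = 0 := by
  have hempty : {r : ℝ | ∃ x : H, ‖x‖ = 1 ∧ r = ‖(inner ℂ (A x) x : ℂ)‖} = ∅ :=
    Set.eq_empty_of_forall_notMem fun _ ⟨x, hx, _⟩ ↦ by simp [Subsingleton.elim x 0] at hx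
  rw [crawford, hempty, Real.sInf_empty]

theorem crawford_adjoint_mul_self_le [CompleteSpace H] (S : H →L[ℂ] H) {x : H} (hx : ‖x‖ = 1) :
    crawford (adjoint S * S) ≤ ‖S x‖ ^ 2 := by
  have h := crawford_le (adjoint S * S) hx
  rwa [inner_adjoint_mul_self_apply, RCLike.norm_ofReal, abs_of_nonneg (by positivity)] at h

end Crawford

theorem stmt0 {H : Type*} [NormedAddCommGroup H] [InnerProductSpace ℂ H] [CompleteSpace H]
    (T : H →L[ℂ] H) :
    ‖T‖ ^ 2 + max (crawford (ContinuousLinearMap.adjoint T * T))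
        (crawford (T * ContinuousLinearMap.adjoint T)) ≤
      ‖ContinuousLinearMap.adjoint T * T + T * ContinuousLinearMap.adjoint T‖ := by
  rcases subsingleton_or_nontrivial H with _ | _
  · simp [Subsingleton.elim T 0, crawford_eq_zero_of_subsingleton]
  rw [← max_add_add_left]
  refine max_le ?_ ?_
  · rw [← LinearIsometryEquiv.norm_map adjoint T]
    refine sq_opNorm_add_le_of_forall_norm_eq_one _ fun x hx ↦ ?_
    linarith [norm_apply_sq_add_norm_adjoint_apply_sq_le T hx, crawford_adjoint_mul_self_le T hx]
  · refine sq_opNorm_add_le_of_forall_norm_eq_one _ fun x hx ↦ ?_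
    have hc := crawford_adjoint_mul_self_le (adjoint T) hx
    rw [adjoint_adjoint] at hc
    linarith [norm_apply_sq_add_norm_adjoint_apply_sq_le T hx]
end

section
/- Let T be a bounded linear operator on a complex Hilbert space and let x be any vector. Then |⟨Tx,x⟩| ≤ ⟨|T|x,x⟩^{1/2} · ⟨|T*|x,x⟩^{1/2}, where |T| = (T*T)^{1/2} and |T*| = (TT*)^{1/2}. -/
/-!
For `ε > 0` the operator `R = |T*| + ε` is positive and invertible, so the Cauchy–Schwarz
inequality for the positive form `⟪R ·, ·⟫`, applied to `R⁻¹ T x` and `x`, gives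
`|⟪T x, x⟫|² ≤ ⟪T* R⁻¹ T x, x⟫ ⟪R x, x⟫`. Since `T` intertwines `T*T` and `TT*`, it
intertwines their continuous functional calculi (approximate by polynomials), whence
`T* R⁻¹ T = |T|² (|T| + ε)⁻¹ ≤ |T|`. Letting `ε → 0` gives the squared inequality.
-/

open ContinuousLinearMap in
/-- The numerical radius `w(T) = sup { |⟨Tx,x⟩| : ‖x‖ = 1 }`. -/
noncomputable def numRad {H : Type*} [NormedAddCommGroup H] [InnerProductSpace ℂ H]
    (T : H →L[ℂ] H) : ℝ :=
  sSup {r : ℝ | ∃ x : H, ‖x‖ = 1 ∧ r = ‖(inner ℂ (T x) x : ℂ)‖}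

/-- `|T| = (T^*T)^{1/2}`; note `absOp (adjoint T) = (TT^*)^{1/2} = |T^*|`. -/
noncomputable def absOp {H : Type*} [NormedAddCommGroup H] [InnerProductSpace ℂ H]
    [CompleteSpace H] (T : H →L[ℂ] H) : H →L[ℂ] H :=
  CFC.sqrt (ContinuousLinearMap.adjoint T * T)

/-- Real powers of a (positive) operator via the continuous functional calculus. -/
noncomputable def opRPow {H : Type*} [NormedAddCommGroup H] [InnerProductSpace ℂ H]
    [CompleteSpace H] (A : H →L[ℂ] H) (r : ℝ) : H →L[ℂ] H :=
  CFC.rpow A r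

open Polynomial Filter Topology ContinuousLinearMap RCLike
open scoped InnerProductSpace

lemma SemiconjBy.aeval {R A : Type*} [CommSemiring R] [Semiring A] [Algebra R A] {b a a' : A}
    (h : SemiconjBy b a a') (p : R[X]) : SemiconjBy b (aeval a p) (aeval a' p) := by
  induction p using Polynomial.induction_on' with
  | add p q hp hq => simpa using hp.add_right hq
  | monomial n r => simpa [Algebra.smul_def] using (h.pow_right n).smul_right r

lemma exists_seq_polynomial_tendstoUniformlyOn {s : Set ℝ} (hs : IsCompact s) {f : ℝ → ℝ}
    (hf : Continuous f) :
    ∃ p : ℕ → ℝ[X], TendstoUniformlyOn (fun n x => (p n).eval x) f atTop s := by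
  have hIcc := hs.isBounded.subset_Icc_sInf_sSup
  choose p hp using fun n : ℕ => exists_polynomial_near_of_continuousOn (sInf s) (sSup s) f
    hf.continuousOn (1 / (n + 1)) Nat.one_div_pos_of_nat
  refine ⟨p, Metric.tendstoUniformlyOn_iff.mpr fun ε hε => ?_⟩
  obtain ⟨N, hN⟩ := exists_nat_one_div_lt hε
  filter_upwards [eventually_ge_atTop N] with n hn x hx
  rw [dist_comm, Real.dist_eq]
  refine (hp n x (hIcc hx)).trans (lt_of_le_of_lt ?_ hN)
  gcongr

lemma Real.continuous_inv_sqrt_add {ε : ℝ} (hε : 0 < ε) :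
    Continuous fun t : ℝ => (√t + ε)⁻¹ :=
  (continuous_sqrt.add continuous_const).inv₀ fun t =>
    (add_pos_of_nonneg_of_pos (sqrt_nonneg t) hε).ne'

section CStarAlgebra

variable {A : Type*} [CStarAlgebra A]

lemma SemiconjBy.cfc_real {b a a' : A} (h : SemiconjBy b a a') (ha : IsSelfAdjoint a)
    (ha' : IsSelfAdjoint a') {f : ℝ → ℝ} (hf : Continuous f) :
    SemiconjBy b (cfc f a) (cfc f a') := by
  obtain ⟨p, hp⟩ := exists_seq_polynomial_tendstoUniformlyOn
    ((spectrum.isCompact a).union (spectrum.isCompact a')) hf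
  have hcfc {c : A} (hc : IsSelfAdjoint c)
      (hsub : spectrum ℝ c ⊆ spectrum ℝ a ∪ spectrum ℝ a') :
      Tendsto (fun n => Polynomial.aeval c (p n)) atTop (𝓝 (cfc f c)) := by
    simp_rw [← cfc_polynomial (p _) c]
    exact tendsto_cfc_fun (hp.mono hsub) (.of_forall fun n => (p n).continuousOn_aeval)
  refine tendsto_nhds_unique ((hcfc ha Set.subset_union_left).const_mul b) ?_
  simpa only [(h.aeval _).eq] using (hcfc ha' Set.subset_union_right).mul_const b

lemma star_mul_cfc_mul_star_mul (a : A) {f : ℝ → ℝ} (hf : Continuous f) :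
    star a * cfc f (a * star a) * a = cfc (fun t => t * f t) (star a * a) := by
  have h : SemiconjBy a (star a * a) (a * star a) := (mul_assoc _ _ _).symm
  rw [mul_assoc, ← (h.cfc_real (.star_mul_self a) (.mul_star_self a) hf).eq, ← mul_assoc,
    cfc_mul (fun t => t) f _ continuousOn_id hf.continuousOn, cfc_id' ℝ (star a * a)]

variable [PartialOrder A] [StarOrderedRing A]

lemma CFC.abs_eq_cfc_sqrt (a : A) : CFC.abs a = cfc Real.sqrt (star a * a) := by
  rw [CFC.abs.eq_1, CFC.sqrt_eq_real_sqrt _ (star_mul_self_nonneg a), cfcₙ_eq_cfc]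

lemma star_mul_cfc_inv_sqrt_add_mul_le_abs (a : A) {ε : ℝ} (hε : 0 < ε) :
    star a * cfc (fun t => (√t + ε)⁻¹) (a * star a) * a ≤ CFC.abs a := by
  have hcont := Real.continuous_inv_sqrt_add hε
  rw [star_mul_cfc_mul_star_mul a hcont, CFC.abs_eq_cfc_sqrt]
  refine cfc_mono fun t ht => ?_
  have ht0 : 0 ≤ t := spectrum_nonneg_of_nonneg (star_mul_self_nonneg a) ht
  rw [← div_eq_mul_inv, div_le_iff₀ (by positivity)]
  nlinarith [Real.mul_self_sqrt ht0, Real.sqrt_nonneg t]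

end CStarAlgebra

section InnerProductSpace

variable {𝕜 E : Type*} [RCLike 𝕜] [NormedAddCommGroup E] [InnerProductSpace 𝕜 E]

lemma ContinuousLinearMap.re_inner_apply_self_le_of_le {S S' : E →L[𝕜] E} (h : S ≤ S')
    (x : E) :
    re ⟪S x, x⟫_𝕜 ≤ re ⟪S' x, x⟫_𝕜 := by
  simpa [inner_sub_left] using ((le_def S S').mp h).re_inner_nonneg_left x

end InnerProductSpace

section HilbertSpace

variable {H : Type*} [NormedAddCommGroup H] [InnerProductSpace ℂ H] [CompleteSpace H]

lemma ContinuousLinearMap.norm_inner_apply_sq_le_of_nonneg {R : H →L[ℂ] H} (hR : 0 ≤ R)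
    (x y : H) :
    ‖⟪R x, y⟫_ℂ‖ ^ 2 ≤ re ⟪R x, x⟫_ℂ * re ⟪R y, y⟫_ℂ := by
  obtain ⟨S, rfl⟩ := CStarAlgebra.nonneg_iff_eq_star_mul_self.mp hR
  have h (u v : H) : ⟪(star S * S) u, v⟫_ℂ = ⟪S u, S v⟫_ℂ := by
    rw [star_eq_adjoint, mul_apply_eq_comp, adjoint_inner_left]
  rw [h, h, h, inner_self_eq_norm_sq, inner_self_eq_norm_sq, ← mul_pow]
  exact pow_le_pow_left₀ (norm_nonneg _) (norm_inner_le_norm _ _) 2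

lemma norm_inner_apply_self_sq_le_add (T : H →L[ℂ] H) (x : H) {ε : ℝ} (hε : 0 < ε) :
    ‖⟪T x, x⟫_ℂ‖ ^ 2 ≤
      re ⟪CFC.abs T x, x⟫_ℂ * (re ⟪CFC.abs (star T) x, x⟫_ℂ + ε * ‖x‖ ^ 2) := by
  have hpos (t : ℝ) : 0 < √t + ε := add_pos_of_nonneg_of_pos (Real.sqrt_nonneg t) hε
  have hR : cfc (fun t => √t + ε) (T * star T) = CFC.abs (star T) + algebraMap ℝ _ ε := by
    rw [cfc_add_const ε (fun t => √t) (T * star T), CFC.abs_eq_cfc_sqrt, star_star]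
  set R := cfc (fun t => √t + ε) (T * star T)
  set R' := cfc (fun t => (√t + ε)⁻¹) (T * star T)
  have hRR' : R * R' = 1 := by
    rw [← cfc_mul _ _ _ (by fun_prop) (Real.continuous_inv_sqrt_add hε).continuousOn,
      ← cfc_one ℝ (T * star T)]
    exact cfc_congr fun t _ => mul_inv_cancel₀ (hpos t).ne'
  have hR0 : 0 ≤ R := cfc_nonneg fun t _ => (hpos t).le
  have hRx : re ⟪R x, x⟫_ℂ = re ⟪CFC.abs (star T) x, x⟫_ℂ + ε * ‖x‖ ^ 2 := by
    rw [hR, add_apply, inner_add_left, map_add, Algebra.algebraMap_eq_smul_one, smul_apply,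
      one_apply_eq_self, ← Complex.coe_smul, inner_smul_left]
    simp [← Complex.ofReal_pow]
  calc ‖⟪T x, x⟫_ℂ‖ ^ 2 = ‖⟪R (R' (T x)), x⟫_ℂ‖ ^ 2 := by
        rw [← mul_apply_eq_comp, hRR', one_apply_eq_self]
    _ ≤ re ⟪R (R' (T x)), R' (T x)⟫_ℂ * re ⟪R x, x⟫_ℂ :=
      norm_inner_apply_sq_le_of_nonneg hR0 _ _
    _ = re ⟪(star T * R' * T) x, x⟫_ℂ * re ⟪R x, x⟫_ℂ := by
      rw [← mul_apply_eq_comp R R', hRR', one_apply_eq_self, star_eq_adjoint,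
        mul_apply_eq_comp, mul_apply_eq_comp, adjoint_inner_left, inner_re_symm]
    _ ≤ re ⟪CFC.abs T x, x⟫_ℂ * (re ⟪CFC.abs (star T) x, x⟫_ℂ + ε * ‖x‖ ^ 2) := by
      rw [← hRx]
      exact mul_le_mul_of_nonneg_right
        (re_inner_apply_self_le_of_le (star_mul_cfc_inv_sqrt_add_mul_le_abs T hε) x)
        (((nonneg_iff_isPositive R).mp hR0).re_inner_nonneg_left x)

lemma norm_inner_apply_self_sq_le (T : H →L[ℂ] H) (x : H) :
    ‖⟪T x, x⟫_ℂ‖ ^ 2 ≤ re ⟪CFC.abs T x, x⟫_ℂ * re ⟪CFC.abs (star T) x, x⟫_ℂ := by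
  refine ge_of_tendsto (x := 𝓝[>] (0 : ℝ)) ?_ (eventually_nhdsWithin_of_forall fun ε hε =>
    norm_inner_apply_self_sq_le_add T x hε)
  exact tendsto_nhdsWithin_of_tendsto_nhds (Continuous.tendsto' (by fun_prop) 0 _ (by simp))

end HilbertSpace

theorem stmt1 {H : Type*} [NormedAddCommGroup H] [InnerProductSpace ℂ H] [CompleteSpace H]
    (T : H →L[ℂ] H) (x : H) :
    ‖(inner ℂ (T x) x : ℂ)‖ ≤
      Real.sqrt ((inner ℂ (absOp T x) x : ℂ).re) *
        Real.sqrt ((inner ℂ (absOp (ContinuousLinearMap.adjoint T) x) x : ℂ).re) := by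
  have habs : 0 ≤ re ⟪CFC.abs T x, x⟫_ℂ :=
    ((nonneg_iff_isPositive _).mp (CFC.abs_nonneg T)).re_inner_nonneg_left x
  change ‖⟪T x, x⟫_ℂ‖ ≤ √(re ⟪CFC.abs T x, x⟫_ℂ) * √(re ⟪CFC.abs (star T) x, x⟫_ℂ)
  rw [← Real.sqrt_mul habs]
  exact Real.le_sqrt_of_sq_le (norm_inner_apply_self_sq_le T x)
end

section
/- Let T be a bounded linear operator on a complex Hilbert space. Then for every real r ≥ 1 and every α with 0 ≤ α ≤ 1, w(T)^{2r} ≤ ‖α|T|^{2r} + (1-α)|T*|^{2r}‖, where w(T) is the numerical radius. -/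
lemma Real.rpow_add_mul_sub_le_rpow {r μ t : ℝ} (hr : 1 ≤ r) (hμ : 0 < μ) (ht : 0 ≤ t) :
    μ ^ r + r * μ ^ (r - 1) * (t - μ) ≤ t ^ r := by
  have bernoulli := one_add_mul_self_le_rpow_one_add
    (show -1 ≤ t / μ - 1 by linarith [div_nonneg ht hμ.le]) hr
  rw [add_sub_cancel, Real.div_rpow ht hμ.le, le_div_iff₀ (by positivity)] at bernoulli
  calc μ ^ r + r * μ ^ (r - 1) * (t - μ) = (1 + r * (t / μ - 1)) * μ ^ r := by
        rw [Real.rpow_sub_one hμ.ne']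
        field_simp
    _ ≤ t ^ r := bernoulli

namespace CFC

variable {A : Type*} [CStarAlgebra A] [PartialOrder A] [StarOrderedRing A]

lemma rpow_sqrt_two_mul (a : A) {r : ℝ} (hr : 0 ≤ r) (ha : 0 ≤ a := by cfc_tac) :
    sqrt a ^ (2 * r) = a ^ r := by
  rw [sqrt_eq_rpow, rpow_rpow_of_exponent_nonneg a _ _ (by norm_num) (by positivity)]
  congr 1
  ring

lemma algebraMap_add_smul_le_rpow {a : A} (ha : 0 ≤ a) {r μ : ℝ} (hr : 1 ≤ r) (hμ : 0 < μ) :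
    algebraMap ℝ A (μ ^ r - r * μ ^ (r - 1) * μ) + (r * μ ^ (r - 1)) • a ≤ a ^ r := by
  rw [rpow_eq_cfc_real ha]
  calc _ = cfc (fun t : ℝ => (μ ^ r - r * μ ^ (r - 1) * μ) + r * μ ^ (r - 1) * t) a := by
        rw [cfc_add .., cfc_const .., cfc_const_mul .., cfc_id' ..]
    _ ≤ _ := cfc_mono (fun t ht => by
          linarith [Real.rpow_add_mul_sub_le_rpow hr hμ (spectrum_nonneg_of_nonneg ha ht)])
        (hg := (Real.continuous_rpow_const (by linarith)).continuousOn)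

end CFC

namespace ContinuousLinearMap

section RCLike

variable {𝕜 E : Type*} [RCLike 𝕜] [NormedAddCommGroup E] [InnerProductSpace 𝕜 E]

lemma reApplyInnerSelf_mono {A B : E →L[𝕜] E} (hAB : A ≤ B) (x : E) :
    A.reApplyInnerSelf x ≤ B.reApplyInnerSelf x := by
  have := ((le_def A B).mp hAB).re_inner_nonneg_left x
  simpa only [reApplyInnerSelf_apply, sub_apply, inner_sub_left, map_sub, sub_nonneg] using this

lemma reApplyInnerSelf_one (x : E) : (1 : E →L[𝕜] E).reApplyInnerSelf x = ‖x‖ ^ 2 := by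
  simp [reApplyInnerSelf_apply]

lemma reApplyInnerSelf_le_norm (A : E →L[𝕜] E) {x : E} (hx : ‖x‖ = 1) :
    A.reApplyInnerSelf x ≤ ‖A‖ := by
  calc A.reApplyInnerSelf x ≤ ‖A x‖ * ‖x‖ := re_inner_le_norm _ _
    _ ≤ ‖A‖ * ‖x‖ * ‖x‖ := by gcongr; exact A.le_opNorm x
    _ = ‖A‖ := by rw [hx, mul_one, mul_one]

variable [CompleteSpace E]

lemma adjoint_mul_self_nonneg (T : E →L[𝕜] E) : 0 ≤ adjoint T * T :=
  (nonneg_iff_isPositive _).mpr (isPositive_adjoint_comp_self T)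

lemma mul_adjoint_self_nonneg (T : E →L[𝕜] E) : 0 ≤ T * adjoint T := by
  simpa using adjoint_mul_self_nonneg (adjoint T)

lemma reApplyInnerSelf_adjoint_mul_self (T : E →L[𝕜] E) (x : E) :
    (adjoint T * T).reApplyInnerSelf x = ‖T x‖ ^ 2 :=
  (T.apply_norm_sq_eq_inner_adjoint_left x).symm

lemma reApplyInnerSelf_mul_adjoint_self (T : E →L[𝕜] E) (x : E) :
    (T * adjoint T).reApplyInnerSelf x = ‖adjoint T x‖ ^ 2 := by
  simpa using reApplyInnerSelf_adjoint_mul_self (adjoint T) x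

lemma norm_inner_apply_self_le_norm_adjoint_apply (T : E →L[𝕜] E) {x : E} (hx : ‖x‖ = 1) :
    ‖inner 𝕜 (T x) x‖ ≤ ‖adjoint T x‖ := by
  rw [← adjoint_inner_right, norm_inner_symm]
  simpa [hx] using norm_inner_le_norm (𝕜 := 𝕜) (adjoint T x) x

end RCLike

section Complex

variable {H : Type*} [NormedAddCommGroup H] [InnerProductSpace ℂ H]

lemma reApplyInnerSelf_real_smul_add (a b : ℝ) (A B : H →L[ℂ] H) (x : H) :
    (a • A + b • B).reApplyInnerSelf x = a * A.reApplyInnerSelf x + b * B.reApplyInnerSelf x := by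
  simp only [reApplyInnerSelf_apply, add_apply, smul_apply, inner_add_left, map_add,
    RCLike.real_smul_eq_coe_smul (K := ℂ), inner_smul_real_left, smul_eq_mul,
    RCLike.re_ofReal_mul]

variable [CompleteSpace H]

lemma rpow_reApplyInnerSelf_le_reApplyInnerSelf_rpow {A : H →L[ℂ] H} (hA : 0 ≤ A) {r : ℝ}
    (hr : 1 ≤ r) {x : H} (hx : ‖x‖ = 1) :
    A.reApplyInnerSelf x ^ r ≤ (A ^ r).reApplyInnerSelf x := by
  set μ := A.reApplyInnerSelf x
  have hμ : 0 ≤ μ := ((nonneg_iff_isPositive A).mp hA).re_inner_nonneg_left x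
  rcases hμ.eq_or_lt with hμ | hμ
  · rw [← hμ, Real.zero_rpow (by linarith)]
    exact ((nonneg_iff_isPositive _).mp CFC.rpow_nonneg).re_inner_nonneg_left x
  calc μ ^ r = (μ ^ r - r * μ ^ (r - 1) * μ) * ‖x‖ ^ 2 + r * μ ^ (r - 1) * μ := by
        rw [hx]; ring
    _ = (algebraMap ℝ _ (μ ^ r - r * μ ^ (r - 1) * μ) +
          (r * μ ^ (r - 1)) • A).reApplyInnerSelf x := by
        rw [Algebra.algebraMap_eq_smul_one, reApplyInnerSelf_real_smul_add, reApplyInnerSelf_one]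
    _ ≤ (A ^ r).reApplyInnerSelf x :=
        reApplyInnerSelf_mono (CFC.algebraMap_add_smul_le_rpow hA hr hμ) x

lemma norm_inner_apply_self_rpow_le_reApplyInnerSelf (T : H →L[ℂ] H) {r α : ℝ} (hr : 1 ≤ r)
    (hα0 : 0 ≤ α) (hα1 : α ≤ 1) {x : H} (hx : ‖x‖ = 1) :
    ‖inner ℂ (T x) x‖ ^ (2 * r) ≤
      (α • (adjoint T * T) ^ r + (1 - α) • (T * adjoint T) ^ r).reApplyInnerSelf x := by
  have hca : ‖inner ℂ (T x) x‖ ^ 2 ≤ (adjoint T * T).reApplyInnerSelf x := by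
    rw [reApplyInnerSelf_adjoint_mul_self]
    gcongr
    simpa [hx] using norm_inner_le_norm (𝕜 := ℂ) (T x) x
  have hcb : ‖inner ℂ (T x) x‖ ^ 2 ≤ (T * adjoint T).reApplyInnerSelf x := by
    rw [reApplyInnerSelf_mul_adjoint_self]
    gcongr
    exact norm_inner_apply_self_le_norm_adjoint_apply T hx
  set c := ‖inner ℂ (T x) x‖
  set a := (adjoint T * T).reApplyInnerSelf x
  set b := (T * adjoint T).reApplyInnerSelf x
  have h1α : 0 ≤ 1 - α := by linarith
  calc c ^ (2 * r) = (c ^ 2) ^ r := by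
        rw [Real.rpow_mul (norm_nonneg _), Real.rpow_two]
    _ ≤ (α * a + (1 - α) * b) ^ r :=
        Real.rpow_le_rpow (sq_nonneg c) (by nlinarith) (by linarith)
    _ ≤ α * a ^ r + (1 - α) * b ^ r :=
        (convexOn_rpow hr).2 ((sq_nonneg c).trans hca) ((sq_nonneg c).trans hcb) hα0 h1α
          (by ring)
    _ ≤ α * ((adjoint T * T) ^ r).reApplyInnerSelf x +
          (1 - α) * ((T * adjoint T) ^ r).reApplyInnerSelf x := by
        gcongr
        · exact rpow_reApplyInnerSelf_le_reApplyInnerSelf_rpow (adjoint_mul_self_nonneg T) hr hx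
        · exact rpow_reApplyInnerSelf_le_reApplyInnerSelf_rpow (mul_adjoint_self_nonneg T) hr hx
    _ = _ := (reApplyInnerSelf_real_smul_add _ _ _ _ x).symm

end Complex

end ContinuousLinearMap

section NumRad

variable {H : Type*} [NormedAddCommGroup H] [InnerProductSpace ℂ H] (T : H →L[ℂ] H)

lemma numRad_nonneg : 0 ≤ numRad T :=
  Real.sSup_nonneg fun _ ⟨_, _, hr⟩ => hr ▸ norm_nonneg _

lemma numRad_le {M : ℝ} (hM : 0 ≤ M) (h : ∀ x : H, ‖x‖ = 1 → ‖inner ℂ (T x) x‖ ≤ M) :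
    numRad T ≤ M :=
  Real.sSup_le (fun _ ⟨x, hx, hr⟩ => hr ▸ h x hx) hM

lemma numRad_rpow_le {p M : ℝ} (hp : 0 < p) (hM : 0 ≤ M)
    (h : ∀ x : H, ‖x‖ = 1 → ‖inner ℂ (T x) x‖ ^ p ≤ M) : numRad T ^ p ≤ M := by
  rw [← Real.le_rpow_inv_iff_of_pos (numRad_nonneg T) hM hp]
  exact numRad_le T (by positivity) fun x hx =>
    (Real.le_rpow_inv_iff_of_pos (norm_nonneg _) hM hp).mpr (h x hx)

end NumRad

lemma opRPow_absOp_two_mul {H : Type*} [NormedAddCommGroup H] [InnerProductSpace ℂ H]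
    [CompleteSpace H] (T : H →L[ℂ] H) {r : ℝ} (hr : 0 ≤ r) :
    opRPow (absOp T) (2 * r) = (ContinuousLinearMap.adjoint T * T) ^ r :=
  CFC.rpow_sqrt_two_mul _ hr (ContinuousLinearMap.adjoint_mul_self_nonneg T)

theorem stmt3 {H : Type*} [NormedAddCommGroup H] [InnerProductSpace ℂ H] [CompleteSpace H]
    (T : H →L[ℂ] H) (r : ℝ) (hr : 1 ≤ r) (α : ℝ) (hα0 : 0 ≤ α) (hα1 : α ≤ 1) :
    numRad T ^ (2 * r) ≤
      ‖α • opRPow (absOp T) (2 * r) +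
        (1 - α) • opRPow (absOp (ContinuousLinearMap.adjoint T)) (2 * r)‖ := by
  rw [opRPow_absOp_two_mul T (by linarith), opRPow_absOp_two_mul _ (by linarith),
    ContinuousLinearMap.adjoint_adjoint]
  exact numRad_rpow_le T (by linarith) (norm_nonneg _) fun x hx =>
    (T.norm_inner_apply_self_rpow_le_reApplyInnerSelf hr hα0 hα1 hx).trans
      (ContinuousLinearMap.reApplyInnerSelf_le_norm _ hx)
end

section
/- Let T be a bounded linear operator on a complex Hilbert space. Then w(T)² ≤ ‖α|T|² + (1-α)|T*|²‖ for every α ∈ [0,1]; in particular w(T)² ≤ min_{0≤α≤1} ‖α T*T + (1-α) TT*‖. -/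
/-!
For a unit vector `x`, Cauchy–Schwarz bounds `|⟨Tx, x⟩|` both by `‖Tx‖` and, writing
`⟨Tx, x⟩ = ⟨x, T*x⟩`, by `‖T*x‖`. A convex combination of the squared bounds is
`α‖Tx‖² + (1-α)‖T*x‖² = ⟨(αT*T + (1-α)TT*)x, x⟩`, which is at most the norm of that operator.
-/

open ContinuousLinearMap RCLike

lemma re_inner_apply_self_le {𝕜 E : Type*} [RCLike 𝕜] [NormedAddCommGroup E]
    [InnerProductSpace 𝕜 E] (A : E →L[𝕜] E) (x : E) :
    re (inner 𝕜 (A x) x) ≤ ‖A‖ * ‖x‖ ^ 2 :=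
  calc re (inner 𝕜 (A x) x) ≤ ‖A x‖ * ‖x‖ := re_inner_le_norm _ _
    _ ≤ ‖A‖ * ‖x‖ * ‖x‖ := by gcongr; exact A.le_opNorm x
    _ = ‖A‖ * ‖x‖ ^ 2 := by ring

section ConvexCombination

variable {H : Type*} [NormedAddCommGroup H] [InnerProductSpace ℂ H] [CompleteSpace H]

lemma norm_inner_apply_self_sq_le_convexComb (T : H →L[ℂ] H) {α : ℝ} (h0 : 0 ≤ α) (h1 : α ≤ 1)
    (x : H) :
    ‖inner ℂ (T x) x‖ ^ 2 ≤ (α * ‖T x‖ ^ 2 + (1 - α) * ‖adjoint T x‖ ^ 2) * ‖x‖ ^ 2 := by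
  have hT : ‖inner ℂ (T x) x‖ ^ 2 ≤ ‖T x‖ ^ 2 * ‖x‖ ^ 2 := by
    rw [← mul_pow]; gcongr; exact norm_inner_le_norm _ _
  have hTadj : ‖inner ℂ (T x) x‖ ^ 2 ≤ ‖adjoint T x‖ ^ 2 * ‖x‖ ^ 2 := by
    rw [← adjoint_inner_right, ← mul_pow, mul_comm]; gcongr; exact norm_inner_le_norm _ _
  nlinarith [mul_le_mul_of_nonneg_left hT h0, mul_le_mul_of_nonneg_left hTadj (sub_nonneg.2 h1)]

lemma re_inner_convexComb_apply_self (T : H →L[ℂ] H) (α : ℝ) (x : H) :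
    re (inner ℂ ((α • (adjoint T * T) + (1 - α) • (T * adjoint T)) x) x) =
      α * ‖T x‖ ^ 2 + (1 - α) * ‖adjoint T x‖ ^ 2 := by
  have hT := apply_norm_sq_eq_inner_adjoint_left T x
  have hTadj := apply_norm_sq_eq_inner_adjoint_left (adjoint T) x
  rw [adjoint_adjoint] at hTadj
  simp only [add_apply, smul_apply, inner_add_left, ← Complex.coe_smul, inner_smul_left,
    Complex.conj_ofReal, map_add]
  rw [hT, hTadj]
  exact congr_arg₂ (· + ·) (re_ofReal_mul ..) (re_ofReal_mul ..)

lemma norm_inner_apply_self_sq_le_opNorm_convexComb (T : H →L[ℂ] H) {α : ℝ} (h0 : 0 ≤ α)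
    (h1 : α ≤ 1) (x : H) :
    ‖inner ℂ (T x) x‖ ^ 2 ≤
      ‖α • (adjoint T * T) + (1 - α) • (T * adjoint T)‖ * ‖x‖ ^ 4 :=
  calc ‖inner ℂ (T x) x‖ ^ 2
      ≤ (α * ‖T x‖ ^ 2 + (1 - α) * ‖adjoint T x‖ ^ 2) * ‖x‖ ^ 2 :=
        norm_inner_apply_self_sq_le_convexComb T h0 h1 x
    _ ≤ ‖α • (adjoint T * T) + (1 - α) • (T * adjoint T)‖ * ‖x‖ ^ 2 * ‖x‖ ^ 2 := by
        rw [← re_inner_convexComb_apply_self]; gcongr; exact re_inner_apply_self_le _ x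
    _ = ‖α • (adjoint T * T) + (1 - α) • (T * adjoint T)‖ * ‖x‖ ^ 4 := by ring

end ConvexCombination

lemma numRad_sq_le {H : Type*} [NormedAddCommGroup H] [InnerProductSpace ℂ H]
    (T : H →L[ℂ] H) {c : ℝ} (hc : 0 ≤ c)
    (h : ∀ x : H, ‖x‖ = 1 → ‖inner ℂ (T x) x‖ ^ 2 ≤ c) :
    numRad T ^ 2 ≤ c := by
  have hnonneg : 0 ≤ numRad T :=
    Real.sSup_nonneg fun r ⟨x, _, hr⟩ => hr ▸ norm_nonneg _
  have hle : numRad T ≤ √c :=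
    Real.sSup_le (fun r ⟨x, hx, hr⟩ => hr ▸ Real.le_sqrt_of_sq_le (h x hx)) (Real.sqrt_nonneg c)
  calc numRad T ^ 2 ≤ √c ^ 2 := by gcongr
    _ = c := Real.sq_sqrt hc

theorem stmt4 {H : Type*} [NormedAddCommGroup H] [InnerProductSpace ℂ H] [CompleteSpace H]
    (T : H →L[ℂ] H) :
    (∀ α : ℝ, 0 ≤ α → α ≤ 1 →
      numRad T ^ 2 ≤
        ‖α • (ContinuousLinearMap.adjoint T * T) + (1 - α) • (T * ContinuousLinearMap.adjoint T)‖) ∧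
    numRad T ^ 2 ≤
      sInf {s : ℝ | ∃ α : ℝ, 0 ≤ α ∧ α ≤ 1 ∧
        s = ‖α • (ContinuousLinearMap.adjoint T * T) +
              (1 - α) • (T * ContinuousLinearMap.adjoint T)‖} := by
  have hconvex : ∀ α : ℝ, 0 ≤ α → α ≤ 1 →
      numRad T ^ 2 ≤ ‖α • (adjoint T * T) + (1 - α) • (T * adjoint T)‖ := fun α h0 h1 =>
    numRad_sq_le T (norm_nonneg _) fun x hx => by
      simpa [hx] using norm_inner_apply_self_sq_le_opNorm_convexComb T h0 h1 x
  refine ⟨hconvex, le_csInf ⟨_, 0, le_rfl, zero_le_one, rfl⟩ ?_⟩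
  rintro s ⟨α, h0, h1, rfl⟩
  exact hconvex α h0 h1
end

section
/- Buzano's inequality: Let a, b, e be vectors in a complex Hilbert space with ‖e‖ = 1. Then |⟨a,e⟩⟨e,b⟩| ≤ (1/2)(‖a‖·‖b‖ + |⟨a,b⟩|). -/
/-!
Reflecting `b` in the line through the unit vector `e` gives `b' = 2⟨e, b⟩e - b`, with `‖b'‖ = ‖b‖`
and `2⟨a, e⟩⟨e, b⟩ = ⟨a, b'⟩ + ⟨a, b⟩`. The triangle and Cauchy–Schwarz inequalities then bound
`2‖⟨a, e⟩⟨e, b⟩‖` by `‖a‖‖b‖ + ‖⟨a, b⟩‖`.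
-/

section

open Submodule

variable {𝕜 E : Type*} [RCLike 𝕜] [NormedAddCommGroup E] [InnerProductSpace 𝕜 E]

local notation "⟪" x ", " y "⟫" => inner 𝕜 x y

theorem Submodule.reflection_span_unit_singleton_apply {e : E} (he : ‖e‖ = 1) (b : E) :
    (𝕜 ∙ e).reflection b = (2 * ⟪e, b⟫) • e - b := by
  rw [reflection_apply, starProjection_unit_singleton 𝕜 he, mul_smul, two_smul, two_smul]

theorem two_mul_inner_mul_inner_eq_inner_reflection_add {e : E} (he : ‖e‖ = 1) (a b : E) :
    2 * (⟪a, e⟫ * ⟪e, b⟫) = ⟪a, (𝕜 ∙ e).reflection b⟫ + ⟪a, b⟫ := by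
  rw [reflection_span_unit_singleton_apply he, inner_sub_right, inner_smul_right]
  ring

theorem norm_inner_mul_inner_le_of_norm_eq_one {e : E} (he : ‖e‖ = 1) (a b : E) :
    ‖⟪a, e⟫ * ⟪e, b⟫‖ ≤ (1 / 2) * (‖a‖ * ‖b‖ + ‖⟪a, b⟫‖) := by
  have h : 2 * ‖⟪a, e⟫ * ⟪e, b⟫‖ ≤ ‖a‖ * ‖b‖ + ‖⟪a, b⟫‖ :=
    calc 2 * ‖⟪a, e⟫ * ⟪e, b⟫‖ = ‖⟪a, (𝕜 ∙ e).reflection b⟫ + ⟪a, b⟫‖ := by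
          rw [← two_mul_inner_mul_inner_eq_inner_reflection_add he, norm_mul (2 : 𝕜),
            RCLike.norm_two]
      _ ≤ ‖a‖ * ‖(𝕜 ∙ e).reflection b‖ + ‖⟪a, b⟫‖ :=
          (norm_add_le _ _).trans (add_le_add_left (norm_inner_le_norm _ _) _)
      _ = ‖a‖ * ‖b‖ + ‖⟪a, b⟫‖ := by rw [LinearIsometryEquiv.norm_map]
  linarith

end

theorem stmt8 {H : Type*} [NormedAddCommGroup H] [InnerProductSpace ℂ H]
    (a b e : H) (he : ‖e‖ = 1) :
    ‖(inner ℂ a e : ℂ) * (inner ℂ e b : ℂ)‖ ≤ (1 / 2) * (‖a‖ * ‖b‖ + ‖(inner ℂ a b : ℂ)‖) :=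
  norm_inner_mul_inner_le_of_norm_eq_one he a b
end

section
/- Let T be a bounded linear operator on a complex Hilbert space and x a unit vector. Then for all real r ≥ 1, |⟨Tx,x⟩|^{2r} ≤ (1/2)|⟨T²x,x⟩|^r + (1/4)⟨(|T|^{2r} + |T*|^{2r})x, x⟩. -/
namespace Real

theorem rpow_add_mul_sub_le_rpow_s9 {a t p : ℝ} (ha : 0 ≤ a) (ht : 0 ≤ t) (hp : 1 ≤ p) :
    a ^ p + p * a ^ (p - 1) * (t - a) ≤ t ^ p := by
  rcases ha.eq_or_lt with rfl | ha
  · rcases hp.eq_or_lt with rfl | hp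
    · simp
    · simpa [zero_rpow (by linarith : p ≠ 0), zero_rpow (by linarith : p - 1 ≠ 0)]
        using rpow_nonneg ht p
  -- Bernoulli's inequality at `s = t / a - 1`
  have hb := one_add_mul_self_le_rpow_one_add (s := t / a - 1) (by
    have := div_nonneg ht ha.le; linarith) hp
  calc a ^ p + p * a ^ (p - 1) * (t - a)
      = a ^ p * (1 + p * (t / a - 1)) := by
        rw [rpow_sub ha, rpow_one]
        field_simp
    _ ≤ a ^ p * (1 + (t / a - 1)) ^ p := by gcongr
    _ = t ^ p := by
        rw [add_sub_cancel, ← mul_rpow ha.le (div_nonneg ht ha.le), mul_div_cancel₀ _ ha.ne']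

theorem add_div_two_rpow_le {a b p : ℝ} (ha : 0 ≤ a) (hb : 0 ≤ b) (hp : 1 ≤ p) :
    ((a + b) / 2) ^ p ≤ (a ^ p + b ^ p) / 2 := by
  have := (convexOn_rpow hp).2 (Set.mem_Ici.2 ha) (Set.mem_Ici.2 hb)
    (by norm_num : (0 : ℝ) ≤ 1 / 2) (by norm_num : (0 : ℝ) ≤ 1 / 2) (by norm_num)
  simp only [smul_eq_mul] at this
  calc ((a + b) / 2) ^ p = (1 / 2 * a + 1 / 2 * b) ^ p := by ring_nf
    _ ≤ 1 / 2 * a ^ p + 1 / 2 * b ^ p := this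
    _ = (a ^ p + b ^ p) / 2 := by ring

theorem mul_rpow_le_add_rpow_two_mul_div_two {a b p : ℝ} (ha : 0 ≤ a) (hb : 0 ≤ b) :
    (a * b) ^ p ≤ (a ^ (2 * p) + b ^ (2 * p)) / 2 := by
  rw [mul_rpow ha hb, mul_comm 2 p, rpow_mul ha, rpow_mul hb, rpow_two, rpow_two]
  linarith [two_mul_le_add_sq (a ^ p) (b ^ p)]

theorem rpow_two_mul_le_of_two_mul_sq_le {n m a b p : ℝ} (hn : 0 ≤ n) (hm : 0 ≤ m) (ha : 0 ≤ a)
    (hb : 0 ≤ b) (hp : 1 ≤ p) (h : 2 * n ^ 2 ≤ a * b + m) :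
    n ^ (2 * p) ≤ 1 / 2 * m ^ p + 1 / 4 * (a ^ (2 * p) + b ^ (2 * p)) := by
  calc n ^ (2 * p) = (n ^ 2) ^ p := by rw [rpow_mul hn, rpow_two]
    _ ≤ ((a * b + m) / 2) ^ p := by gcongr; linarith
    _ ≤ ((a * b) ^ p + m ^ p) / 2 := add_div_two_rpow_le (by positivity) hm hp
    _ ≤ 1 / 2 * m ^ p + 1 / 4 * (a ^ (2 * p) + b ^ (2 * p)) := by
        linarith [mul_rpow_le_add_rpow_two_mul_div_two (p := p) ha hb]

end Real

/-- Buzano's inequality. -/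
theorem two_mul_norm_inner_mul_inner_le {𝕜 E : Type*} [RCLike 𝕜] [NormedAddCommGroup E]
    [InnerProductSpace 𝕜 E] (a b e : E) (he : ‖e‖ = 1) :
    2 * ‖inner 𝕜 a e * inner 𝕜 e b‖ ≤ ‖a‖ * ‖b‖ + ‖inner 𝕜 a b‖ := by
  set c : 𝕜 := inner 𝕜 e b
  -- reflecting `b` in the line through `e` preserves its norm
  have hu : ‖(2 * c) • e - b‖ = ‖b‖ := by
    have hre : RCLike.re (inner 𝕜 ((2 * c) • e) b) = 2 * ‖c‖ ^ 2 := by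
      rw [inner_smul_left, (starRingEnd 𝕜).map_mul, map_ofNat, mul_assoc, RCLike.conj_mul]
      norm_cast
    have hsq : ‖(2 * c) • e - b‖ ^ 2 = ‖b‖ ^ 2 := by
      rw [@norm_sub_sq 𝕜, hre, norm_smul, he, norm_mul, RCLike.norm_two]
      ring
    exact (sq_eq_sq₀ (norm_nonneg _) (norm_nonneg _)).1 hsq
  calc 2 * ‖inner 𝕜 a e * c‖
      = ‖inner 𝕜 a ((2 * c) • e - b) + inner 𝕜 a b‖ := by
        rw [inner_sub_right, inner_smul_right, sub_add_cancel, norm_mul, norm_mul, norm_mul,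
          RCLike.norm_two]
        ring
    _ ≤ ‖a‖ * ‖b‖ + ‖inner 𝕜 a b‖ := by
        grw [norm_add_le, norm_inner_le_norm, hu]

section

open ContinuousLinearMap RCLike

variable {H : Type*} [NormedAddCommGroup H] [InnerProductSpace ℂ H] [CompleteSpace H]

theorem add_mul_re_inner_le_re_inner_cfc {B : H →L[ℂ] H} (hB : IsSelfAdjoint B) {f : ℝ → ℝ}
    (hf : ContinuousOn f (spectrum ℝ B)) {c d : ℝ} (h : ∀ t ∈ spectrum ℝ B, c + d * t ≤ f t)
    (x : H) : c * ‖x‖ ^ 2 + d * re (inner ℂ (B x) x) ≤ re (inner ℂ (cfc f B x) x) := by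
  have hle : algebraMap ℝ (H →L[ℂ] H) c + d • B ≤ cfc f B := by
    calc algebraMap ℝ (H →L[ℂ] H) c + d • B = cfc (fun t : ℝ ↦ c + d * t) B := by
          rw [cfc_add .., cfc_const c B, cfc_const_mul .., cfc_id' ℝ B]
      _ ≤ cfc f B := cfc_mono h
  have := ((le_def _ _).1 hle).re_inner_nonneg_left x
  simp only [sub_apply, add_apply, inner_sub_left, inner_add_left, map_sub, map_add,
    Algebra.algebraMap_eq_smul_one, smul_apply, one_apply_eq_self] at this
  rw [← Complex.coe_smul, ← Complex.coe_smul, inner_smul_left, inner_smul_left,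
    Complex.conj_ofReal, Complex.conj_ofReal] at this
  have hx := inner_self_eq_norm_sq (𝕜 := ℂ) x
  simp only [re_to_complex, Complex.re_ofReal_mul] at this hx ⊢
  rw [hx] at this
  linarith

theorem rpow_re_inner_le_re_inner_rpow {B : H →L[ℂ] H} (hB : 0 ≤ B) {x : H} (hx : ‖x‖ = 1)
    {p : ℝ} (hp : 1 ≤ p) : re (inner ℂ (B x) x) ^ p ≤ re (inner ℂ ((B ^ p) x) x) := by
  set a := re (inner ℂ (B x) x)
  have ha : 0 ≤ a := ((nonneg_iff_isPositive B).1 hB).re_inner_nonneg_left x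
  -- integrate the tangent line of `t ↦ t ^ p` at `t = a`
  have := add_mul_re_inner_le_re_inner_cfc hB.isSelfAdjoint (f := fun t ↦ t ^ p)
    (c := a ^ p - p * a ^ (p - 1) * a) (d := p * a ^ (p - 1))
    (continuousOn_id.rpow_const fun _ _ ↦ Or.inr (by linarith)) (fun t ht ↦ by
      have := Real.rpow_add_mul_sub_le_rpow_s9 ha (spectrum_nonneg_of_nonneg hB ht) hp
      linarith) x
  rw [hx] at this
  rw [CFC.rpow_eq_cfc_real hB]
  linarith

theorem opRPow_absOp_two_mul_s9 (S : H →L[ℂ] H) {p : ℝ} (hp : 0 ≤ p) :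
    opRPow (absOp S) (2 * p) = (adjoint S * S) ^ p := by
  have := CFC.rpow_sqrt_nnreal (x := (2 * p).toNNReal) (star_mul_self_nonneg S)
  rwa [Real.coe_toNNReal _ (by positivity), mul_div_cancel_left₀ _ two_ne_zero] at this

theorem norm_apply_rpow_two_mul_le (S : H →L[ℂ] H) {x : H} (hx : ‖x‖ = 1) {p : ℝ} (hp : 1 ≤ p) :
    ‖S x‖ ^ (2 * p) ≤ re (inner ℂ (opRPow (absOp S) (2 * p) x) x) := by
  have hnorm : ‖S x‖ ^ 2 = re (inner ℂ ((adjoint S * S) x) x) := by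
    rw [mul_apply_eq_comp, adjoint_inner_left, inner_self_eq_norm_sq]
  rw [opRPow_absOp_two_mul_s9 S (by linarith), Real.rpow_mul (norm_nonneg _), Real.rpow_two, hnorm]
  exact rpow_re_inner_le_re_inner_rpow (star_mul_self_nonneg S) hx hp

end

theorem stmt9 {H : Type*} [NormedAddCommGroup H] [InnerProductSpace ℂ H] [CompleteSpace H]
    (T : H →L[ℂ] H) (x : H) (hx : ‖x‖ = 1) (r : ℝ) (hr : 1 ≤ r) :
    ‖(inner ℂ (T x) x : ℂ)‖ ^ (2 * r) ≤
      (1 / 2) * ‖(inner ℂ ((T * T) x) x : ℂ)‖ ^ r +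
        (1 / 4) * ((inner ℂ ((opRPow (absOp T) (2 * r) +
          opRPow (absOp (ContinuousLinearMap.adjoint T)) (2 * r)) x) x : ℂ)).re := by
  set T' := ContinuousLinearMap.adjoint T
  have hbuzano : 2 * ‖inner ℂ (T x) x‖ ^ 2 ≤ ‖T x‖ * ‖T' x‖ + ‖inner ℂ ((T * T) x) x‖ := by
    have := two_mul_norm_inner_mul_inner_le (𝕜 := ℂ) (T x) (T' x) x hx
    rwa [ContinuousLinearMap.adjoint_inner_right, ← sq, norm_pow,
      ContinuousLinearMap.adjoint_inner_right, ← mul_apply_eq_comp] at this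
  calc ‖inner ℂ (T x) x‖ ^ (2 * r)
      ≤ 1 / 2 * ‖inner ℂ ((T * T) x) x‖ ^ r + 1 / 4 * (‖T x‖ ^ (2 * r) + ‖T' x‖ ^ (2 * r)) :=
        Real.rpow_two_mul_le_of_two_mul_sq_le (norm_nonneg _) (norm_nonneg _) (norm_nonneg _)
          (norm_nonneg _) hr hbuzano
    _ ≤ _ := by
        rw [add_apply, inner_add_left, Complex.add_re]
        gcongr
        · exact norm_apply_rpow_two_mul_le T hx hr
        · exact norm_apply_rpow_two_mul_le T' hx hr
end

section
/- Let Sₙ be the n×n nilpotent shift matrix with subdiagonal entries equal to 1 and all other entries 0. Then the numerical radius of Sₙ equals cos(π/(n+1)). -/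
open Finset Matrix Real

section NumericalRadius

variable {H : Type*} [NormedAddCommGroup H] [InnerProductSpace ℂ H]

lemma norm_inner_map_smul_smul (T : H →L[ℂ] H) (r : ℂ) (x : H) :
    ‖inner ℂ (T (r • x)) (r • x)‖ = ‖r‖ ^ 2 * ‖inner ℂ (T x) x‖ := by
  simp only [map_smul, inner_smul_left, inner_smul_right, norm_mul, RCLike.norm_conj]
  ring

lemma numRad_eq_of_norm_inner_le_of_eq (T : H →L[ℂ] H) {c : ℝ}
    (hle : ∀ x, ‖inner ℂ (T x) x‖ ≤ c * ‖x‖ ^ 2)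
    (heq : ∃ x ≠ 0, ‖inner ℂ (T x) x‖ = c * ‖x‖ ^ 2) : numRad T = c := by
  obtain ⟨x, hx0, hx⟩ := heq
  refine IsGreatest.csSup_eq ⟨⟨(‖x‖⁻¹ : ℂ) • x, norm_smul_inv_norm hx0, ?_⟩, ?_⟩
  · rw [norm_inner_map_smul_smul, hx, norm_inv, Complex.norm_real, norm_norm]
    field_simp [norm_ne_zero_iff.mpr hx0]
  · rintro r ⟨y, hy, rfl⟩
    simpa [hy] using hle y

end NumericalRadius

lemma mul_le_div_mul_sq_add_div_mul_sq {p q : ℝ} (hp : 0 < p) (hq : 0 < q) (a b : ℝ) :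
    a * b ≤ (p / q * a ^ 2 + q / p * b ^ 2) / 2 := by
  rw [div_mul_eq_mul_div, div_mul_eq_mul_div, div_add_div _ _ hq.ne' hp.ne', le_div_iff₀ two_pos,
    le_div_iff₀ (by positivity)]
  nlinarith [sq_nonneg (p * a - q * b)]

section PathEigenvector

variable {n : ℕ} {c : ℝ} {t : ℕ → ℝ}

lemma sum_mul_succ_le (ht0 : t 0 = 0) (htn : t (n + 1) = 0) (hpos : ∀ k < n, 0 < t (k + 1))
    (hrec : ∀ k, t (k + 2) + t k = 2 * c * t (k + 1)) {a : ℕ → ℝ} (ha : a n = 0) :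
    ∑ k ∈ range n, a k * a (k + 1) ≤ c * ∑ k ∈ range n, a k ^ 2 := by
  set F : ℕ → ℝ := fun k => t (k + 2) / t (k + 1) * a k ^ 2 / 2
  set G : ℕ → ℝ := fun k => t k / t (k + 1) * a k ^ 2 / 2
  have hterm : ∀ k ∈ range n, a k * a (k + 1) ≤ F k + G (k + 1) := by
    intro k hk
    obtain hk' | rfl := (Nat.succ_le_of_lt (mem_range.mp hk)).lt_or_eq
    · simpa [F, G, add_div] using
        mul_le_div_mul_sq_add_div_mul_sq (hpos (k + 1) hk') (hpos k (by omega)) (a k) (a (k + 1))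
    · simp [F, G, ha, htn]
  have hshift : ∑ k ∈ range n, G (k + 1) = ∑ k ∈ range n, G k := by
    have h1 := sum_range_succ' G n
    have h2 := sum_range_succ G n
    have hG0 : G 0 = 0 := by simp [G, ht0]
    have hGn : G n = 0 := by simp [G, ha]
    linarith
  have hdiag : ∀ k ∈ range n, F k + G k = c * a k ^ 2 := by
    intro k hk
    have := hpos k (mem_range.mp hk)
    simp only [F, G]
    field_simp
    linear_combination a k ^ 2 * hrec k
  calc ∑ k ∈ range n, a k * a (k + 1) ≤ ∑ k ∈ range n, (F k + G (k + 1)) := sum_le_sum hterm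
    _ = ∑ k ∈ range n, (F k + G k) := by rw [sum_add_distrib, sum_add_distrib, hshift]
    _ = c * ∑ k ∈ range n, a k ^ 2 := by rw [sum_congr rfl hdiag, mul_sum]

lemma sum_mul_succ_eq (ht0 : t 0 = 0) (htn : t (n + 1) = 0)
    (hrec : ∀ k, t (k + 2) + t k = 2 * c * t (k + 1)) :
    ∑ k ∈ range n, t (k + 1) * t (k + 2) = c * ∑ k ∈ range n, t (k + 1) ^ 2 := by
  have hshift : ∑ k ∈ range n, t k * t (k + 1) = ∑ k ∈ range n, t (k + 1) * t (k + 2) := by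
    have h1 := sum_range_succ' (fun k => t k * t (k + 1)) n
    have h2 := sum_range_succ (fun k => t k * t (k + 1)) n
    simp only [ht0, htn, zero_mul, mul_zero, add_zero] at h1 h2
    linarith
  have hsum : ∑ k ∈ range n, (t (k + 1) * t (k + 2) + t k * t (k + 1))
      = 2 * (c * ∑ k ∈ range n, t (k + 1) ^ 2) := by
    rw [mul_sum, mul_sum]
    exact sum_congr rfl fun k _ => by linear_combination t (k + 1) * hrec k
  rw [sum_add_distrib, hshift] at hsum
  linarith

end PathEigenvector

section Sine

lemma sin_natCast_add_two_mul_add_sin (θ : ℝ) (k : ℕ) :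
    sin (↑(k + 2) * θ) + sin (↑k * θ) = 2 * cos θ * sin (↑(k + 1) * θ) := by
  rw [mul_right_comm, two_mul_sin_mul_cos]
  push_cast
  ring_nf

variable (n : ℕ)

lemma sin_natCast_mul_pi_div_succ_pos {k : ℕ} (hk0 : 0 < k) (hkn : k ≤ n) :
    0 < sin (k * (π / (n + 1))) := by
  have hk : (k : ℝ) < n + 1 := by exact_mod_cast Nat.lt_succ_of_le hkn
  apply sin_pos_of_pos_of_lt_pi (by positivity)
  calc (k : ℝ) * (π / (n + 1)) < (n + 1) * (π / (n + 1)) := by gcongr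
    _ = π := by field_simp

lemma sin_succ_mul_pi_div_succ : sin (↑(n + 1) * (π / (n + 1))) = 0 := by
  rw [Nat.cast_succ, mul_div_cancel₀ _ (by positivity), sin_pi]

lemma cos_pi_div_succ_nonneg (hn : 1 ≤ n) : 0 ≤ cos (π / (n + 1)) := by
  have hθ : 0 < π / (n + 1) := by positivity
  apply cos_nonneg_of_neg_pi_div_two_le_of_le (by linarith [pi_pos])
  apply div_le_div_of_nonneg_left pi_pos.le two_pos
  have : (1 : ℝ) ≤ n := by exact_mod_cast hn
  linarith

end Sine

section ZeroExtend

variable {n : ℕ} {α : Type*}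

def zeroExtend [Zero α] (x : Fin n → α) (k : ℕ) : α :=
  if h : k < n then x ⟨k, h⟩ else 0

lemma zeroExtend_self [Zero α] (x : Fin n → α) : zeroExtend x n = 0 := by
  simp [zeroExtend]

lemma zeroExtend_val [Zero α] (x : Fin n → α) (i : Fin n) : zeroExtend x i = x i := by
  simp [zeroExtend]

lemma sum_ite_natCast_eq [AddCommMonoid α] (x : Fin n → α) (m : ℕ) :
    ∑ i : Fin n, (if m = (i : ℕ) then x i else 0) = zeroExtend x m := by
  unfold zeroExtend
  split_ifs with h
  · rw [sum_eq_single ⟨m, h⟩] <;> simp +contextual [Fin.ext_iff, eq_comm]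
  · exact sum_eq_zero fun i _ => if_neg fun (him : m = i) => h (him ▸ i.isLt)

lemma sq_norm_eq_sum_zeroExtend (x : EuclideanSpace ℂ (Fin n)) :
    ‖x‖ ^ 2 = ∑ k ∈ range n, ‖zeroExtend x k‖ ^ 2 := by
  rw [EuclideanSpace.norm_sq_eq, ← Fin.sum_univ_eq_sum_range (fun k => ‖zeroExtend x k‖ ^ 2)]
  simp only [zeroExtend_val]

end ZeroExtend

section ShiftMatrix

def shiftMatrix (n : ℕ) : Matrix (Fin n) (Fin n) ℂ :=
  fun i j => if (j : ℕ) + 1 = i then 1 else 0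

variable {n : ℕ}

lemma conjTranspose_shiftMatrix_mulVec (x : Fin n → ℂ) (j : Fin n) :
    ((shiftMatrix n)ᴴ *ᵥ x) j = zeroExtend x (j + 1) := by
  simp [mulVec, dotProduct, shiftMatrix, conjTranspose_apply, ← sum_ite_natCast_eq]

lemma inner_toEuclideanCLM_shiftMatrix (x : EuclideanSpace ℂ (Fin n)) :
    inner ℂ (toEuclideanCLM (𝕜 := ℂ) (shiftMatrix n) x) x
      = ∑ k ∈ range n, star (zeroExtend x k) * zeroExtend x (k + 1) := by
  rw [EuclideanSpace.inner_eq_star_dotProduct, ofLp_toEuclideanCLM, star_mulVec, dotProduct_comm,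
    ← dotProduct_mulVec]
  simp only [dotProduct, conjTranspose_shiftMatrix_mulVec]
  rw [← Fin.sum_univ_eq_sum_range (fun k => star (zeroExtend x k) * zeroExtend x (k + 1))]
  simp only [zeroExtend_val, Pi.star_apply]

variable (n)

lemma norm_inner_toEuclideanCLM_shiftMatrix_le (x : EuclideanSpace ℂ (Fin n)) :
    ‖inner ℂ (toEuclideanCLM (𝕜 := ℂ) (shiftMatrix n) x) x‖ ≤ cos (π / (n + 1)) * ‖x‖ ^ 2 := by
  rw [inner_toEuclideanCLM_shiftMatrix, sq_norm_eq_sum_zeroExtend]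
  calc ‖∑ k ∈ range n, star (zeroExtend x k) * zeroExtend x (k + 1)‖
      ≤ ∑ k ∈ range n, ‖zeroExtend x k‖ * ‖zeroExtend x (k + 1)‖ :=
        (norm_sum_le _ _).trans_eq (by simp only [norm_mul, norm_star])
    _ ≤ cos (π / (n + 1)) * ∑ k ∈ range n, ‖zeroExtend x k‖ ^ 2 :=
        sum_mul_succ_le (t := fun k : ℕ => sin (k * (π / (n + 1)))) (by simp)
          (sin_succ_mul_pi_div_succ n)
          (fun k hk => sin_natCast_mul_pi_div_succ_pos n k.succ_pos hk)
          (fun k => sin_natCast_add_two_mul_add_sin _ k) (by simp [zeroExtend_self])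

lemma exists_norm_inner_toEuclideanCLM_shiftMatrix_eq (hn : 1 ≤ n) :
    ∃ x : EuclideanSpace ℂ (Fin n), x ≠ 0 ∧
      ‖inner ℂ (toEuclideanCLM (𝕜 := ℂ) (shiftMatrix n) x) x‖ = cos (π / (n + 1)) * ‖x‖ ^ 2 := by
  set t : ℕ → ℝ := fun k => sin (k * (π / (n + 1)))
  set x : EuclideanSpace ℂ (Fin n) := WithLp.toLp 2 fun i => (t (i + 1) : ℂ)
  have hx : ∀ k ≤ n, zeroExtend x k = t (k + 1) := by
    intro k hk
    obtain hk | rfl := hk.lt_or_eq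
    · simp [zeroExtend, hk, x]
    · simp [zeroExtend_self, t, sin_succ_mul_pi_div_succ]
  have hinner : inner ℂ (toEuclideanCLM (𝕜 := ℂ) (shiftMatrix n) x) x
      = ((∑ k ∈ range n, t (k + 1) * t (k + 2) : ℝ) : ℂ) := by
    rw [inner_toEuclideanCLM_shiftMatrix, Complex.ofReal_sum]
    refine sum_congr rfl fun k hk => ?_
    rw [hx k (mem_range.mp hk).le, hx (k + 1) (mem_range.mp hk), Complex.star_def,
      Complex.conj_ofReal, Complex.ofReal_mul]
  have hnorm : ‖x‖ ^ 2 = ∑ k ∈ range n, t (k + 1) ^ 2 := by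
    rw [sq_norm_eq_sum_zeroExtend]
    refine sum_congr rfl fun k hk => ?_
    rw [hx k (mem_range.mp hk).le, Complex.norm_real, Real.norm_eq_abs, sq_abs]
  have hx0 : x ≠ 0 := by
    intro h0
    have hpos : 0 < ∑ k ∈ range n, t (k + 1) ^ 2 := sum_pos (fun k hk =>
      pow_pos (sin_natCast_mul_pi_div_succ_pos n k.succ_pos (mem_range.mp hk)) 2)
      ⟨0, mem_range.mpr hn⟩
    rw [← hnorm, h0, norm_zero, zero_pow two_ne_zero] at hpos
    exact hpos.false
  refine ⟨x, hx0, ?_⟩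
  rw [hinner, hnorm, sum_mul_succ_eq (by simp [t]) (sin_succ_mul_pi_div_succ n)
    (fun k => sin_natCast_add_two_mul_add_sin _ k), Complex.norm_real, Real.norm_of_nonneg]
  exact mul_nonneg (cos_pi_div_succ_nonneg n hn) (sum_nonneg fun k _ => sq_nonneg _)

end ShiftMatrix

theorem stmt15 (n : ℕ) (hn : 1 ≤ n) :
    letI S : Matrix (Fin n) (Fin n) ℂ := fun i j => if (j : ℕ) + 1 = (i : ℕ) then 1 else 0
    numRad (Matrix.toEuclideanCLM (𝕜 := ℂ) S) = Real.cos (Real.pi / (n + 1)) :=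
  numRad_eq_of_norm_inner_le_of_eq _ (norm_inner_toEuclideanCLM_shiftMatrix_le n)
    (exists_norm_inner_toEuclideanCLM_shiftMatrix_eq n hn)
end

section
/- Let p(z) = zⁿ + a_{n-1}z^{n-1} + ⋯ + a₁z + a₀ be a monic complex polynomial of degree n ≥ 2. Then every zero λ of p satisfies |λ| ≤ (1/2)(|a_{n-1}| + cos(π/n)) + (1/2)√((|a_{n-1}| - cos(π/n))² + 2(1 + Σ_{i=0}^{n-2}|a_i|²)). -/
/-!
Put `r = ‖λ‖`, `T = r^(n-1)`, `Y = ∑_{i<n-1} r^(2i)` and `S = ∑_{i<n-1} ‖aᵢ‖²`. The root equation and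
Cauchy–Schwarz give `r·T² ≤ ‖a_{n-1}‖·T² + √S·√Y·T`, and since `cos (π/n)` is the numerical radius of
the nilpotent shift on `ℝ^(n-1)`, `∑_{i<n-1} rⁱ·r^(i+1) ≤ cos (π/n)·Y + √Y·T`. Adding, `r·(T² + Y)` is
bounded by the quadratic form of `[[‖a_{n-1}‖, w/2], [w/2, cos (π/n)]]` at `(T, √Y)`, where
`w = √(2(1+S)) ≥ 1 + √S`, hence by its largest eigenvalue times `T² + Y`.
-/

open Finset Real

lemma sin_nat_mul_pi_div_pos {k N : ℕ} (hk : 0 < k) (hkN : k < N) :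
    0 < sin (k * (π / N)) := by
  have hN : (0 : ℝ) < N := by exact_mod_cast hk.trans hkN
  apply sin_pos_of_pos_of_lt_pi (by positivity)
  rw [mul_div_assoc', div_lt_iff₀ hN, mul_comm π]
  exact mul_lt_mul_of_pos_right (by exact_mod_cast hkN) pi_pos

lemma sin_add_two_mul_eq (x θ : ℝ) :
    sin (x + 2 * θ) = 2 * cos θ * sin (x + θ) - sin x := by
  have h₁ := sin_add (x + θ) θ
  have h₂ := sin_sub (x + θ) θ
  rw [add_sub_cancel_right] at h₂
  rw [show x + 2 * θ = x + θ + θ by ring]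
  linear_combination h₁ + h₂

lemma two_mul_le_div_mul_sq_add_div_mul_sq {s t : ℝ} (hs : 0 < s) (ht : 0 < t) (x y : ℝ) :
    2 * (x * y) ≤ t / s * x ^ 2 + s / t * y ^ 2 := by
  have key : t / s * x ^ 2 + s / t * y ^ 2 - 2 * (x * y) = (t * x - s * y) ^ 2 / (s * t) := by
    field_simp; ring
  nlinarith [div_nonneg (sq_nonneg (t * x - s * y)) (mul_pos hs ht).le]

/-- The weights `sin ((k+1)θ) / sin (kθ)` come from the Perron eigenvector `(sin (kθ))ₖ` of the
path graph, and the weight vanishes at `j = N - 2` because `sin (Nθ) = 0`. -/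
lemma sum_mul_succ_add_le_cos_mul_sum_sq {N : ℕ} (x : ℕ → ℝ) {j : ℕ} (hj : j + 2 ≤ N) :
    ∑ i ∈ range j, x i * x (i + 1) +
        sin ((j + 2) * (π / N)) / sin ((j + 1) * (π / N)) / 2 * x j ^ 2 ≤
      cos (π / N) * ∑ i ∈ range (j + 1), x i ^ 2 := by
  set θ := π / N
  induction j with
  | zero =>
    have hs : 0 < sin θ := by simpa using sin_nat_mul_pi_div_pos one_pos (by omega : 1 < N)
    rw [Nat.cast_zero, zero_add, zero_add, one_mul, sin_two_mul]
    field_simp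
    simp
  | succ j ih =>
    have hs₁ : 0 < sin ((j + 1) * θ) := by
      simpa using sin_nat_mul_pi_div_pos (Nat.succ_pos j) (by omega : j + 1 < N)
    have hs₂ : 0 < sin ((j + 2) * θ) := by
      simpa [add_assoc, one_add_one_eq_two] using
        sin_nat_mul_pi_div_pos (Nat.succ_pos (j + 1)) (by omega : j + 2 < N)
    have hs₃ : sin ((j + 1 + 2) * θ) = 2 * cos θ * sin ((j + 2) * θ) - sin ((j + 1) * θ) := by
      convert sin_add_two_mul_eq ((j + 1) * θ) θ using 2 <;> ring_nf
    have amgm := two_mul_le_div_mul_sq_add_div_mul_sq hs₁ hs₂ (x j) (x (j + 1))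
    have hweight : sin ((j + 1 + 2) * θ) / sin ((j + 1 + 1) * θ) / 2 =
        cos θ - sin ((j + 1) * θ) / sin ((j + 2) * θ) / 2 := by
      rw [hs₃, add_assoc (j : ℝ) 1 1, one_add_one_eq_two]
      field_simp
    push_cast
    rw [hweight, sum_range_succ, sum_range_succ _ (j + 1)]
    linarith [ih (by omega)]

theorem sum_mul_succ_le_cos_pi_div_mul_sum_sq (N : ℕ) (x : ℕ → ℝ) :
    ∑ i ∈ range (N - 2), x i * x (i + 1) ≤ cos (π / N) * ∑ i ∈ range (N - 1), x i ^ 2 := by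
  obtain hN | ⟨j, rfl⟩ : N < 2 ∨ ∃ j, N = j + 2 := by
    rcases lt_or_ge N 2 with h | h
    · exact .inl h
    · exact .inr ⟨N - 2, by omega⟩
  · simp [Nat.sub_eq_zero_of_le (by omega : N ≤ 1), Nat.sub_eq_zero_of_le (by omega : N ≤ 2)]
  · have h := sum_mul_succ_add_le_cos_mul_sum_sq x (le_refl (j + 2))
    have hsin : sin ((j + 2) * (π / (j + 2 : ℕ))) = 0 := by
      rw [Nat.cast_add, Nat.cast_two, mul_div_cancel₀ _ (by positivity), sin_pi]
    rw [hsin, zero_div, zero_div, zero_mul, add_zero] at h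
    simpa using h

lemma quadratic_form_le_largest_eigenvalue_mul (p q w u v : ℝ) :
    p * u ^ 2 + w * u * v + q * v ^ 2 ≤
      ((1 / 2) * (p + q) + (1 / 2) * √((p - q) ^ 2 + w ^ 2)) * (u ^ 2 + v ^ 2) := by
  set D := √((p - q) ^ 2 + w ^ 2)
  have hD : D ^ 2 = (p - q) ^ 2 + w ^ 2 := sq_sqrt (by positivity)
  have hD0 : 0 ≤ D := sqrt_nonneg _
  clear_value D
  rcases hD0.eq_or_lt with hD0 | hD0
  · subst hD0
    have hw : w = 0 := by nlinarith
    have hpq : p = q := by nlinarith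
    subst hw hpq
    linarith
  · suffices 0 ≤ D * ((D - p + q) * u ^ 2 - 2 * w * u * v + (D + p - q) * v ^ 2) by
      nlinarith [nonneg_of_mul_nonneg_right this hD0]
    nlinarith [sq_nonneg (w * u - (D + p - q) * v), sq_nonneg (w * v - (D - p + q) * u)]

lemma norm_pow_le_sum_norm_mul_norm_pow {𝕜 : Type*} [NormedDivisionRing 𝕜] {n : ℕ}
    {a : ℕ → 𝕜} {z : 𝕜} (h : z ^ n + ∑ i ∈ range n, a i * z ^ i = 0) :
    ‖z‖ ^ n ≤ ∑ i ∈ range n, ‖a i‖ * ‖z‖ ^ i :=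
  calc ‖z‖ ^ n = ‖∑ i ∈ range n, a i * z ^ i‖ := by
        rw [← norm_pow, eq_neg_of_add_eq_zero_left h, norm_neg]
    _ ≤ ∑ i ∈ range n, ‖a i * z ^ i‖ := norm_sum_le _ _
    _ = ∑ i ∈ range n, ‖a i‖ * ‖z‖ ^ i := by simp only [norm_mul, norm_pow]

lemma norm_pow_succ_le_of_root {𝕜 : Type*} [NormedDivisionRing 𝕜] {m : ℕ}
    {a : ℕ → 𝕜} {z : 𝕜} (h : z ^ (m + 1) + ∑ i ∈ range (m + 1), a i * z ^ i = 0) :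
    ‖z‖ ^ (m + 1) ≤
      ‖a m‖ * ‖z‖ ^ m + √(∑ i ∈ range m, ‖a i‖ ^ 2) * √(∑ i ∈ range m, (‖z‖ ^ i) ^ 2) := by
  have hsum := norm_pow_le_sum_norm_mul_norm_pow h
  rw [sum_range_succ] at hsum
  have hcs := sum_mul_le_sqrt_mul_sqrt (range m) (fun i => ‖a i‖) (fun i => ‖z‖ ^ i)
  linarith

lemma mul_sum_sq_pow_le {r : ℝ} (hr : 0 ≤ r) (m : ℕ) :
    r * ∑ i ∈ range (m + 1), (r ^ i) ^ 2 ≤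
      cos (π / (m + 2 : ℕ)) * ∑ i ∈ range (m + 1), (r ^ i) ^ 2 +
        √(∑ i ∈ range (m + 1), (r ^ i) ^ 2) * r ^ (m + 1) := by
  have hshift := sum_mul_succ_le_cos_pi_div_mul_sum_sq (m + 2) (fun i => r ^ i)
  simp only [Nat.add_sub_cancel, show m + 2 - 1 = m + 1 from rfl] at hshift
  have hlast : r ^ m ≤ √(∑ i ∈ range (m + 1), (r ^ i) ^ 2) :=
    le_sqrt_of_sq_le (single_le_sum (fun i _ => sq_nonneg (r ^ i)) (self_mem_range_succ m))
  calc r * ∑ i ∈ range (m + 1), (r ^ i) ^ 2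
      = ∑ i ∈ range m, r ^ i * r ^ (i + 1) + r ^ m * r ^ (m + 1) := by
        rw [mul_sum, sum_range_succ]
        congr 1
        · exact sum_congr rfl fun i _ => by ring
        · ring
    _ ≤ _ := add_le_add hshift (mul_le_mul_of_nonneg_right hlast (pow_nonneg hr _))

theorem stmt17 (n : ℕ) (hn : 2 ≤ n) (a : ℕ → ℂ) (lam : ℂ)
    (hroot : lam ^ n + ∑ i ∈ Finset.range n, a i * lam ^ i = 0) :
    ‖lam‖ ≤
      (1 / 2) * (‖a (n - 1)‖ + Real.cos (Real.pi / n)) +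
        (1 / 2) * Real.sqrt ((‖a (n - 1)‖ - Real.cos (Real.pi / n)) ^ 2 +
          2 * (1 + ∑ i ∈ Finset.range (n - 1), ‖a i‖ ^ 2)) := by
  obtain ⟨m, rfl⟩ : ∃ m, n = m + 2 := ⟨n - 2, by omega⟩
  rw [show m + 2 - 1 = m + 1 from rfl]
  set r := ‖lam‖
  set S := ∑ i ∈ range (m + 1), ‖a i‖ ^ 2
  set Y := ∑ i ∈ range (m + 1), (r ^ i) ^ 2
  set T := r ^ (m + 1)
  have hT : 0 ≤ T := by positivity
  have hY : √Y ^ 2 = Y := sq_sqrt (by positivity)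
  have hw : 1 + √S ≤ √(2 * (1 + S)) :=
    le_sqrt_of_sq_le (by nlinarith [sq_sqrt (by positivity : 0 ≤ S), sq_nonneg (1 - √S)])
  have hrayleigh : r * (T ^ 2 + √Y ^ 2) ≤
      ‖a (m + 1)‖ * T ^ 2 + √(2 * (1 + S)) * T * √Y + cos (π / (m + 2 : ℕ)) * √Y ^ 2 := by
    rw [hY]
    calc r * (T ^ 2 + Y) = r ^ (m + 2) * T + r * Y := by ring
      _ ≤ (‖a (m + 1)‖ * T + √S * √Y) * T + (cos (π / (m + 2 : ℕ)) * Y + √Y * T) :=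
        add_le_add (mul_le_mul_of_nonneg_right (norm_pow_succ_le_of_root hroot) hT)
          (mul_sum_sq_pow_le (norm_nonneg lam) m)
      _ ≤ _ := by nlinarith [mul_le_mul_of_nonneg_right hw (mul_nonneg hT (sqrt_nonneg Y))]
  have hpos : 0 < T ^ 2 + √Y ^ 2 := by
    rw [hY]
    linarith [sq_nonneg T, single_le_sum (fun i _ => sq_nonneg (r ^ i)) (mem_range.2 m.succ_pos)]
  have h := le_of_mul_le_mul_right (hrayleigh.trans (quadratic_form_le_largest_eigenvalue_mul
    _ _ _ _ _)) hpos
  rwa [sq_sqrt (by positivity : (0 : ℝ) ≤ 2 * (1 + S))] at h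
end
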